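/- If F ⊆ F' are countable Borel equivalence relations on a standard Borel space X, F has finite classes, and F' is hyperfinite (an increasing union of finite Borel equivalence relations), then there exists an increasing sequence (F_n) of Borel equivalence relations with finite classes such that F ⊆ F_n for all n and ⋃_n F_n = F'. -/

import Mathlib

open Filter

/-- `E` is an equivalence relation (as a set of pairs). -/
def IsEqv {X : Type*} (E : Set (X × X)) : Prop :=
  (∀ x, (x, x) ∈ E) ∧ (∀ x y, (x, y) ∈ E → (y, x) ∈ E) ∧
    (∀ x y z, (x, y) ∈ E → (y, z) ∈ E → (x, z) ∈ E)

/-- all classes of `E` are finite. -/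
def FiniteClasses {X : Type*} (E : Set (X × X)) : Prop :=
  ∀ x, {y | (x, y) ∈ E}.Finite

/-- all classes of `E` are countable. -/
def CountableClasses {X : Type*} (E : Set (X × X)) : Prop :=
  ∀ x, {y | (x, y) ∈ E}.Countable

/-- `E` is an increasing union of finite Borel equivalence relations. -/
def Hyperfinite {X : Type*} [MeasurableSpace X] (E : Set (X × X)) : Prop :=
  ∃ F : ℕ → Set (X × X), Monotone F ∧ (∀ n, MeasurableSet (F n)) ∧
    (∀ n, IsEqv (F n)) ∧ (∀ n, FiniteClasses (F n)) ∧ (⋃ n, F n) = E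

/-- `[ℕ]^ℕ`: infinite subsets of `ℕ`, identified with their increasing enumerations. -/
abbrev Inc : Type := {f : ℕ → ℕ // StrictMono f}

/-- the length-`n` initial segment of `x : ℕ → ℕ`, as a finite sequence. -/
def seg (x : ℕ → ℕ) (n : ℕ) : List ℕ := (List.range n).map x

/-!
Let `G n` witness the hyperfiniteness of `F'` and let `A n` be the set of points whose `F`-class
lies inside their `G n`-class. Since `F`-classes are finite, the `A n` increase to the whole space;
each is `F`-invariant, with analytic complement. Novikov's separation theorem, applied to these
complements, yields Borel sets `C n ⊆ A n` still covering the space, and iterated Lusin separation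
enlarges each `C n` to an `F`-invariant Borel set `D n ⊆ A n`; taking partial unions makes them
increase. Then `F ∪ (G n ∩ D n × D n)` works: on `D n` the relation `G n` already contains `F`,
and outside `D n` it is just `F`.
-/

open Set Function Filter MeasureTheory PiNat Topology

section Novikov

variable {α : Type*} [MeasurableSpace α]

def MeasurablySeparableSeq (s : ℕ → Set α) : Prop :=
  ∃ u : ℕ → Set α, (∀ n, s n ⊆ u n) ∧ (∀ n, MeasurableSet (u n)) ∧ ⋂ n, u n = ∅

theorem MeasurablySeparableSeq.of_update_iUnion {s t : ℕ → Set α} {j : ℕ}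
    (hst : s j = ⋃ k, t k) (h : ∀ k, MeasurablySeparableSeq (update s j (t k))) :
    MeasurablySeparableSeq s := by
  choose u hsu hu hempty using h
  refine ⟨update (fun n => ⋂ k, u k n) j (⋃ k, u k j), fun n => ?_, fun n => ?_, ?_⟩
  · rcases eq_or_ne n j with rfl | hn
    · simpa [hst] using iUnion_mono fun k => by simpa using hsu k n
    · simpa [hn] using fun k => by simpa [hn] using hsu k n
  · rcases eq_or_ne n j with rfl | hn
    · simpa using MeasurableSet.iUnion fun k => hu k n
    · simpa [hn] using MeasurableSet.iInter fun k => hu k n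
  · refine eq_empty_of_forall_notMem fun x hx => ?_
    rw [mem_iInter] at hx
    obtain ⟨k, hk⟩ := mem_iUnion.1 (by simpa using hx j)
    have : x ∈ ⋂ n, u k n := mem_iInter.2 fun n => by
      rcases eq_or_ne n j with rfl | hn
      · exact hk
      · exact mem_iInter.1 (by simpa [hn] using hx n) k
    simp [hempty k] at this

theorem MeasurablySeparableSeq.of_measurablySeparable {s : ℕ → Set α} {i j : ℕ} (hij : i ≠ j)
    (h : MeasurablySeparable (s i) (s j)) : MeasurablySeparableSeq s := by
  obtain ⟨u, hsu, hdisj, hu⟩ := h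
  refine ⟨fun n => if n = i then u else if n = j then uᶜ else univ, fun n => ?_, fun n => ?_, ?_⟩
  · dsimp only
    split_ifs with hi hj
    · exact hi ▸ hsu
    · exact hj ▸ hdisj.subset_compl_right
    · exact subset_univ _
  · dsimp only
    split_ifs
    exacts [hu, hu.compl, .univ]
  · refine eq_empty_of_forall_notMem fun x hx => ?_
    have hxi := mem_iInter.1 hx i
    have hxj := mem_iInter.1 hx j
    simp only [if_neg hij.symm] at hxi hxj
    exact hxj hxi

theorem exists_not_measurablySeparableSeq_cylinder_succ {f : ℕ → (ℕ → ℕ) → α}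
    {x : ℕ → ℕ → ℕ} {m : ℕ → ℕ}
    (h : ¬ MeasurablySeparableSeq fun n => f n '' cylinder (x n) (m n)) (j : ℕ) :
    ∃ y ∈ cylinder (x j) (m j), ¬ MeasurablySeparableSeq fun n =>
      f n '' update (fun n => cylinder (x n) (m n)) j (cylinder y (m j + 1)) n := by
  by_contra! H
  refine h (.of_update_iUnion (j := j)
    (t := fun k => f j '' cylinder (update (x j) (m j) k) (m j + 1))
    (by rw [← image_iUnion, iUnion_cylinder_update (E := fun _ => ℕ)]) fun k => ?_)
  convert H _ (update_mem_cylinder _ _ k) using 2 with n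
  exact (apply_update (fun n s => f n '' s) _ j _ n).symm

theorem eventually_image_cylinder_subset {β : Type*} [TopologicalSpace β] {f : (ℕ → ℕ) → β}
    {z : ℕ → ℕ} (hf : ContinuousAt f z) {u : Set β} (hu : u ∈ 𝓝 (f z)) :
    ∀ᶠ N in atTop, f '' cylinder z N ⊆ u := by
  obtain ⟨_, ⟨y, n, rfl⟩, hz, hyu⟩ :=
    (isTopologicalBasis_cylinders fun _ : ℕ => ℕ).mem_nhds_iff.1 (hf hu)
  rw [← mem_cylinder_iff_eq.1 hz] at hyu
  exact eventually_atTop.2 ⟨n, fun N hN => image_subset_iff.2 ((cylinder_anti z hN).trans hyu)⟩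

theorem exists_forall_cylinder_eq_of_nested {x : ℕ → ℕ → ℕ} {m : ℕ → ℕ}
    (hm : Tendsto m atTop atTop) (hx : ∀ s t, s ≤ t → x t ∈ cylinder (x s) (m s)) :
    ∃ z, ∀ t, cylinder z (m t) = cylinder (x t) (m t) := by
  choose T hT using fun k => (hm.eventually_gt_atTop k).exists
  refine ⟨fun k => x (T k) k, fun t => mem_cylinder_iff_eq.1 (mem_cylinder_iff.2 fun k hk => ?_)⟩
  rcases le_total t (T k) with h | h
  · exact mem_cylinder_iff.1 (hx t _ h) k hk
  · exact (mem_cylinder_iff.1 (hx _ t h) k (hT k)).symm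

theorem exists_shrinking_cylinders_of_forall_refine (Q : (ℕ → Set (ℕ → ℕ)) → Prop)
    (h0 : Q fun _ => univ)
    (hstep : ∀ (x : ℕ → ℕ → ℕ) (m : ℕ → ℕ), Q (fun n => cylinder (x n) (m n)) → ∀ j,
        ∃ y ∈ cylinder (x j) (m j),
        Q (update (fun n => cylinder (x n) (m n)) j (cylinder y (m j + 1)))) :
    ∃ (z : ℕ → ℕ → ℕ) (m : ℕ → ℕ → ℕ), (∀ j, Tendsto (fun t => m t j) atTop atTop) ∧
      ∀ t, Q fun n => cylinder (z n) (m t n) := by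
  choose! g hgmem hgQ using hstep
  -- the coordinate refined at step `t`; each coordinate is refined infinitely often
  let c : ℕ → ℕ := fun t => t.unpair.1
  let st : ℕ → (ℕ → ℕ → ℕ) × (ℕ → ℕ) := fun t => Nat.rec (fun _ _ => 0, fun _ => 0)
    (fun t p => (update p.1 (c t) (g p.1 p.2 (c t)), update p.2 (c t) (p.2 (c t) + 1))) t
  set x := fun t => (st t).1
  set m := fun t => (st t).2
  have hx_succ : ∀ t, x (t + 1) = update (x t) (c t) (g (x t) (m t) (c t)) := fun t => rfl
  have hm_succ : ∀ t, m (t + 1) = update (m t) (c t) (m t (c t) + 1) := fun t => rfl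
  have hQ : ∀ t, Q fun n => cylinder (x t n) (m t n) := by
    intro t
    induction t with
    | zero => convert h0 using 2; exact cylinder_zero _
    | succ t ih =>
      convert hgQ _ _ ih (c t) using 2 with n
      rw [hx_succ, hm_succ]
      rcases eq_or_ne n (c t) with rfl | hn <;> simp [*]
  have hm_mono : ∀ j, Monotone fun t => m t j := fun j => monotone_nat_of_le_succ fun t => by
    rw [hm_succ]
    rcases eq_or_ne j (c t) with rfl | h <;> simp [*]
  have hm_tendsto : ∀ j, Tendsto (fun t => m t j) atTop atTop := by
    intro j
    refine tendsto_atTop_atTop_of_monotone (hm_mono j) fun N => ?_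
    induction N with
    | zero => exact ⟨0, Nat.zero_le _⟩
    | succ N ih =>
      obtain ⟨t, ht⟩ := ih
      have hc : c (Nat.pair j t) = j := by simp [c]
      refine ⟨Nat.pair j t + 1, ?_⟩
      rw [hm_succ, hc, update_self]
      exact Nat.succ_le_succ (ht.trans (hm_mono j (Nat.right_le_pair j t)))
  have hchain : ∀ j s t, s ≤ t → x t j ∈ cylinder (x s j) (m s j) := by
    intro j s t hst
    induction t, hst using Nat.le_induction with
    | base => exact self_mem_cylinder _ _
    | succ t hst ih =>
      rw [hx_succ]
      rcases eq_or_ne j (c t) with hj | h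
      · rw [hj, update_self, ← hj, ← mem_cylinder_iff_eq.1 ih]
        exact cylinder_anti _ (hm_mono j hst) (hgmem _ _ (hQ t) j)
      · rwa [update_of_ne h]
  choose z hz using fun j => exists_forall_cylinder_eq_of_nested (hm_tendsto j) (hchain j)
  exact ⟨z, m, hm_tendsto, fun t => by simpa only [hz] using hQ t⟩

theorem measurablySeparableSeq_of_analyticSet [TopologicalSpace α] [T2Space α]
    [OpensMeasurableSpace α] {s : ℕ → Set α} (hs : ∀ n, AnalyticSet (s n))
    (h : ⋂ n, s n = ∅) : MeasurablySeparableSeq s := by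
  by_cases hempty : ∃ n, s n = ∅
  · obtain ⟨n, hn⟩ := hempty
    exact .of_measurablySeparable n.succ_ne_self.symm ⟨∅, hn.subset, disjoint_empty _, .empty⟩
  simp only [not_exists] at hempty
  choose f hfc hfs using fun n => ((AnalyticSet_def _).mp (hs n)).resolve_left (hempty n)
  by_contra hsep
  obtain ⟨z, m, hm, hQ⟩ := exists_shrinking_cylinders_of_forall_refine
    (fun C => ¬ MeasurablySeparableSeq fun n => f n '' C n) (by simpa [hfs] using hsep)
    fun _ _ hQ j => exists_not_measurablySeparableSeq_cylinder_succ hQ j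
  have hall : ∀ i j, f i (z i) = f j (z j) := by
    intro i j
    by_contra hne
    have hij : i ≠ j := fun h => hne (h ▸ rfl)
    obtain ⟨u, v, hu, hv, hzu, hzv, huv⟩ := t2_separation hne
    have hti := (hm i).eventually
      (eventually_image_cylinder_subset (hfc i).continuousAt (hu.mem_nhds hzu))
    have htj := (hm j).eventually
      (eventually_image_cylinder_subset (hfc j).continuousAt (hv.mem_nhds hzv))
    obtain ⟨t, hti, htj⟩ := (hti.and htj).exists
    exact hQ t (.of_measurablySeparable hij ⟨u, hti, huv.symm.mono_left htj, hu.measurableSet⟩)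
  have : f 0 (z 0) ∈ ⋂ n, s n := mem_iInter.2 fun n => hfs n ▸ hall n 0 ▸ mem_range_self _
  simp [h] at this

theorem exists_measurableSet_subset_of_analyticSet_compl [TopologicalSpace α] [T2Space α]
    [OpensMeasurableSpace α] {A : ℕ → Set α} (hA : ∀ n, AnalyticSet (A n)ᶜ)
    (hcover : ∀ x, ∃ n, x ∈ A n) :
    ∃ C : ℕ → Set α, (∀ n, MeasurableSet (C n)) ∧ (∀ n, C n ⊆ A n) ∧ ∀ x, ∃ n, x ∈ C n := by
  obtain ⟨u, hAu, hu, hempty⟩ := measurablySeparableSeq_of_analyticSet hA <| by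
    rw [← compl_iUnion, compl_empty_iff, iUnion_eq_univ_iff]
    exact hcover
  refine ⟨fun n => (u n)ᶜ, fun n => (hu n).compl, fun n => compl_subset_comm.1 (hAu n),
    fun x => ?_⟩
  simpa using (hempty ▸ notMem_empty x : x ∉ ⋂ n, u n)

end Novikov

section Saturation

variable {α : Type*}

def IsSaturated (E : Set (α × α)) (A : Set α) : Prop :=
  ∀ ⦃x y⦄, (x, y) ∈ E → y ∈ A → x ∈ A

variable [TopologicalSpace α] [PolishSpace α] [MeasurableSpace α] [BorelSpace α]
  {E : Set (α × α)} {A C : Set α}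

theorem exists_measurableSet_preimage_subset (hE : MeasurableSet E) (hA : AnalyticSet Aᶜ)
    (hEA : IsSaturated E A) (hC : MeasurableSet C) (hCA : C ⊆ A) :
    ∃ C', (MeasurableSet C' ∧ C' ⊆ A) ∧ ∀ ⦃x y⦄, (x, y) ∈ E → y ∈ C → x ∈ C' := by
  have hpre : AnalyticSet (Prod.fst '' (E ∩ univ ×ˢ C)) :=
    (hE.inter (MeasurableSet.univ.prod hC)).analyticSet.image_of_continuous continuous_fst
  have hpreA : Prod.fst '' (E ∩ univ ×ˢ C) ⊆ A := by
    rintro _ ⟨⟨x, y⟩, ⟨hxy, -, hy⟩, rfl⟩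
    exact hEA hxy (hCA hy)
  obtain ⟨u, hpu, hAu, hu⟩ := hpre.measurablySeparable hA (disjoint_compl_right_iff_subset.2 hpreA)
  exact ⟨u, ⟨hu, by simpa using hAu.subset_compl_left⟩,
    fun x y hxy hy => hpu ⟨(x, y), ⟨hxy, mem_univ _, hy⟩, rfl⟩⟩

theorem exists_saturated_measurableSet_between (hE : MeasurableSet E) (hA : AnalyticSet Aᶜ)
    (hEA : IsSaturated E A) (hC : MeasurableSet C) (hCA : C ⊆ A) :
    ∃ D, MeasurableSet D ∧ C ⊆ D ∧ D ⊆ A ∧ IsSaturated E D := by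
  choose! g hg hgE using fun C (hC : MeasurableSet C) (hCA : C ⊆ A) =>
    exists_measurableSet_preimage_subset hE hA hEA hC hCA
  have hiter : ∀ k, MeasurableSet (g^[k] C) ∧ g^[k] C ⊆ A := by
    intro k
    induction k with
    | zero => exact ⟨hC, hCA⟩
    | succ k ih => rw [iterate_succ_apply']; exact hg _ ih.1 ih.2
  refine ⟨⋃ k, g^[k] C, .iUnion fun k => (hiter k).1, subset_iUnion (fun k => g^[k] C) 0,
    iUnion_subset fun k => (hiter k).2, fun x y hxy hy => ?_⟩
  obtain ⟨k, hk⟩ := mem_iUnion.1 hy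
  refine mem_iUnion.2 ⟨k + 1, ?_⟩
  rw [iterate_succ_apply']
  exact hgE _ (hiter k).1 (hiter k).2 hxy hk

theorem exists_monotone_saturated_exhaustion (hE : MeasurableSet E) {A : ℕ → Set α}
    (hAmono : Monotone A) (hA : ∀ n, AnalyticSet (A n)ᶜ) (hEA : ∀ n, IsSaturated E (A n))
    (hcover : ∀ x, ∃ n, x ∈ A n) :
    ∃ D : ℕ → Set α, Monotone D ∧ (∀ n, MeasurableSet (D n)) ∧ (∀ n, D n ⊆ A n) ∧
      (∀ n, IsSaturated E (D n)) ∧ ∀ x, ∃ n, x ∈ D n := by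
  obtain ⟨C, hC, hCA, hCcover⟩ := exists_measurableSet_subset_of_analyticSet_compl hA hcover
  choose D hD hCD hDA hDE using fun n =>
    exists_saturated_measurableSet_between hE (hA n) (hEA n) (hC n) (hCA n)
  refine ⟨accumulate D, monotone_accumulate, fun n => ?_, fun n x hx => ?_, fun n x y hxy hy => ?_,
    fun x => ?_⟩
  · rw [accumulate_def]
    exact .biUnion (to_countable _) fun k _ => hD k
  · obtain ⟨k, hk, hx⟩ := mem_accumulate.1 hx
    exact hAmono hk (hDA k hx)
  · obtain ⟨k, hk, hy⟩ := mem_accumulate.1 hy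
    exact mem_accumulate.2 ⟨k, hk, hDE k hxy hy⟩
  · obtain ⟨n, hn⟩ := hCcover x
    exact ⟨n, subset_accumulate (hCD n hn)⟩

end Saturation

section Relations

variable {X : Type*} {F G : Set (X × X)}

def classSubsetSet (F G : Set (X × X)) : Set X :=
  {x | ∀ y, (x, y) ∈ F → (x, y) ∈ G}

theorem classSubsetSet_mono {G' : Set (X × X)} (h : G ⊆ G') :
    classSubsetSet F G ⊆ classSubsetSet F G' :=
  fun _ hx y hy => h (hx y hy)

theorem compl_classSubsetSet : (classSubsetSet F G)ᶜ = Prod.fst '' (F \ G) := by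
  ext x
  simp [classSubsetSet]

theorem IsEqv.isSaturated_classSubsetSet (hF : IsEqv F) (hG : IsEqv G) :
    IsSaturated F (classSubsetSet F G) := by
  intro x y hxy hy w hxw
  have hyx := hF.2.1 _ _ hxy
  exact hG.2.2 _ _ _ (hG.2.1 _ _ (hy x hyx)) (hy w (hF.2.2 _ _ _ hyx hxw))

theorem FiniteClasses.exists_mem_classSubsetSet (hF : FiniteClasses F) {G : ℕ → Set (X × X)}
    (hGmono : Monotone G) (hFG : F ⊆ ⋃ n, G n) (x : X) : ∃ n, x ∈ classSubsetSet F (G n) := by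
  have hev : ∀ y ∈ {y | (x, y) ∈ F}, ∀ᶠ n in atTop, (x, y) ∈ G n := fun y hy => by
    obtain ⟨n, hn⟩ := mem_iUnion.1 (hFG hy)
    exact eventually_atTop.2 ⟨n, fun m hm => hGmono hm hn⟩
  exact ((hF x).eventually_all.2 hev).exists

theorem FiniteClasses.union_inter (hF : FiniteClasses F) (hG : FiniteClasses G) (S : Set (X × X)) :
    FiniteClasses (F ∪ G ∩ S) :=
  fun x => ((hF x).union (hG x)).subset fun _ hy => hy.imp id And.left

theorem IsEqv.union_inter_prod (hF : IsEqv F) (hG : IsEqv G) {D : Set X}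
    (hDF : IsSaturated F D) (hDG : D ⊆ classSubsetSet F G) : IsEqv (F ∪ G ∩ D ×ˢ D) := by
  refine ⟨fun x => .inl (hF.1 x), ?_, ?_⟩
  · rintro x y (h | ⟨h, hx, hy⟩)
    exacts [.inl (hF.2.1 _ _ h), .inr ⟨hG.2.1 _ _ h, hy, hx⟩]
  · rintro x y z (hxy | ⟨hxy, hx, hy⟩) (hyz | ⟨hyz, hy', hz⟩)
    · exact .inl (hF.2.2 _ _ _ hxy hyz)
    · have hxyG := hG.2.1 _ _ (hDG hy' x (hF.2.1 _ _ hxy))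
      exact .inr ⟨hG.2.2 _ _ _ hxyG hyz, hDF hxy hy', hz⟩
    · exact .inr ⟨hG.2.2 _ _ _ hxy (hDG hy z hyz), hx, hDF (hF.2.1 _ _ hyz) hy⟩
    · exact .inr ⟨hG.2.2 _ _ _ hxy hyz, hx, hz⟩

theorem iUnion_union_inter_prod_eq {G : ℕ → Set (X × X)} (hGmono : Monotone G) {D : ℕ → Set X}
    (hDmono : Monotone D) (hcover : ∀ x, ∃ n, x ∈ D n) (hFG : F ⊆ ⋃ n, G n) :
    ⋃ n, F ∪ G n ∩ D n ×ˢ D n = ⋃ n, G n := by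
  refine subset_antisymm (iUnion_subset fun n => union_subset hFG
    (inter_subset_left.trans (subset_iUnion G n))) ?_
  rintro ⟨x, y⟩ hxy
  obtain ⟨k, hk⟩ := mem_iUnion.1 hxy
  obtain ⟨l, hl⟩ := hcover x
  obtain ⟨m, hm⟩ := hcover y
  refine mem_iUnion.2 ⟨k ⊔ l ⊔ m, .inr ⟨hGmono ?_ hk, hDmono ?_ hl, hDmono ?_ hm⟩⟩ <;> omega

end Relations

theorem stmt0_general {X : Type*} [MeasurableSpace X] [StandardBorelSpace X]
    (F F' : Set (X × X)) (hFm : MeasurableSet F) (hFe : IsEqv F)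
    (hsub : F ⊆ F') (hfin : FiniteClasses F) (hhyp : Hyperfinite F') :
    ∃ Fn : ℕ → Set (X × X), Monotone Fn ∧
      (∀ n, MeasurableSet (Fn n) ∧ IsEqv (Fn n) ∧ FiniteClasses (Fn n) ∧ F ⊆ Fn n) ∧
      (⋃ n, Fn n) = F' := by
  obtain ⟨G, hGmono, hGm, hGe, hGfin, rfl⟩ := hhyp
  let := upgradeStandardBorel X
  obtain ⟨D, hDmono, hDm, hDA, hDsat, hDcover⟩ := exists_monotone_saturated_exhaustion hFm
    (fun _ _ h => classSubsetSet_mono (hGmono h))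
    (fun n => compl_classSubsetSet (F := F) ▸
      (hFm.diff (hGm n)).analyticSet.image_of_continuous continuous_fst)
    (fun n => hFe.isSaturated_classSubsetSet (hGe n))
    (hfin.exists_mem_classSubsetSet hGmono hsub)
  refine ⟨fun n => F ∪ G n ∩ D n ×ˢ D n, fun a b h => ?_, fun n => ⟨?_, ?_, ?_, subset_union_left⟩,
    iUnion_union_inter_prod_eq hGmono hDmono hDcover hsub⟩
  · exact union_subset_union_right _
      (inter_subset_inter (hGmono h) (prod_mono (hDmono h) (hDmono h)))
  · exact hFm.union ((hGm n).inter ((hDm n).prod (hDm n)))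
  · exact hFe.union_inter_prod (hGe n) (hDsat n) (hDA n)
  · exact hfin.union_inter (hGfin n) _

theorem stmt0 {X : Type*} [MeasurableSpace X] [StandardBorelSpace X]
    (F F' : Set (X × X)) (hFm : MeasurableSet F) (hF'm : MeasurableSet F')
    (hFe : IsEqv F) (hF'e : IsEqv F')
    (hFc : CountableClasses F) (hF'c : CountableClasses F')
    (hsub : F ⊆ F') (hfin : FiniteClasses F) (hhyp : Hyperfinite F') :
    ∃ Fn : ℕ → Set (X × X), Monotone Fn ∧
      (∀ n, MeasurableSet (Fn n) ∧ IsEqv (Fn n) ∧ FiniteClasses (Fn n) ∧ F ⊆ Fn n) ∧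
      (⋃ n, Fn n) = F' :=
  stmt0_general F F' hFm hFe hsub hfin hhyp
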